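/- arXiv:2512.00525 — 2 statements merged into one kernel-verified Lean document; each statement's English description precedes it below -/
import Mathlib

section
/- Let n ≥ 1 and let g be a nonzero polynomial in K[T] with deg g < p^{n-1}. Then μ(ν_n·g) = μ(g) and λ(ν_n·g) = p^n − p^{n-1} + λ(g). (Equivalently, for a nonzero θ ∈ K[G_{n-1}], the corestriction cor_{n-1}^n(θ) ∈ K[G_n] satisfies μ(cor_{n-1}^n(θ)) = μ(θ) and λ(cor_{n-1}^n(θ)) = p^n − p^{n-1} + λ(θ).) -/
/-!
Modulo `p`, Frobenius gives `(1 + T)^(k p^(n-1)) ≡ (1 + T^(p^(n-1)))^k`, and the geometric sum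
`Σ_{k<p} (1 + Y)^k = ((1 + Y)^p - 1) / Y ≡ Y^(p-1)`; hence `ν_n = T^(p^n - p^(n-1)) + p·h` with
`h ∈ ℤ[T]`. The coefficients of `p·h·g` have valuation `> μ(g)`, so they change neither the minimal
valuation of the coefficients of `T^(p^n - p^(n-1))·g` nor the first index where it is attained.
-/

open Polynomial

/-- The axioms of the normalized additive valuation `ord_ϖ : K → ℤ` of a discrete
valuation ring `O` with uniformizer `ϖ` and fraction field `K`, recorded on the
nonzero elements of `K`: multiplicativity and the ultrametric inequality. -/
def IsOrd {K : Type*} [Field K] (v : K → ℤ) : Prop :=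
  (∀ x y : K, x ≠ 0 → y ≠ 0 → v (x * y) = v x + v y) ∧
  (∀ x y : K, x ≠ 0 → y ≠ 0 → x + y ≠ 0 → min (v x) (v y) ≤ v (x + y))

/-- The μ-invariant of a (nonzero) polynomial `F = Σ aᵢ Tⁱ` over `K`:
`μ(F) = minᵢ ord_ϖ(aᵢ)`. -/
noncomputable def muInv {K : Type*} [Field K] (v : K → ℤ) (F : Polynomial K) : ℤ :=
  sInf {m : ℤ | ∃ i, F.coeff i ≠ 0 ∧ v (F.coeff i) = m}

/-- The λ-invariant of a (nonzero) polynomial over `K`: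
`λ(F) = min { i : ord_ϖ(aᵢ) = μ(F) }`. -/
noncomputable def lamInv {K : Type*} [Field K] (v : K → ℤ) (F : Polynomial K) : ℕ :=
  sInf {i : ℕ | F.coeff i ≠ 0 ∧ v (F.coeff i) = muInv v F}

/-- `F ∈ O[T]`: all coefficients lie in the valuation ring, i.e. have valuation `≥ 0`. -/
def IntegralPoly {K : Type*} [Field K] (v : K → ℤ) (F : Polynomial K) : Prop :=
  ∀ i, F.coeff i ≠ 0 → 0 ≤ v (F.coeff i)

/-- The residue field `O/(ϖ)` has characteristic `p`, i.e. `p` lies in the maximal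
ideal `(ϖ)` of `O` (equivalently `ord_ϖ(p) ≥ 1`, or `p = 0` in `K`). -/
def ResidueCharP {K : Type*} [Field K] (v : K → ℤ) (p : ℕ) : Prop :=
  (p : K) = 0 ∨ 1 ≤ v (p : K)

/-- `ν_n(T) = Σ_{k=0}^{p-1} (1+T)^{k·p^(n-1)}`, the polynomial representing the
corestriction map `cor_{n-1}^n : K[G_{n-1}] → K[G_n]`. -/
noncomputable def nuPoly (K : Type*) [Field K] (p n : ℕ) : Polynomial K :=
  ∑ k ∈ Finset.range p, (1 + Polynomial.X) ^ (k * p ^ (n - 1))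

theorem sum_range_one_add_pow_eq_pow_pred {R : Type*} [CommRing R] [IsDomain R]
    (p : ℕ) [Fact p.Prime] [CharP R p] (Y : R) :
    ∑ k ∈ Finset.range p, (1 + Y) ^ k = Y ^ (p - 1) := by
  have hp : p - 1 ≠ 0 := Nat.sub_ne_zero_of_lt (Fact.out : p.Prime).one_lt
  by_cases hY : Y = 0
  · simp [hY, zero_pow hp]
  refine mul_right_cancel₀ hY ?_
  calc (∑ k ∈ Finset.range p, (1 + Y) ^ k) * Y
      = (∑ k ∈ Finset.range p, (1 + Y) ^ k) * ((1 + Y) - 1) := by ring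
    _ = Y ^ p := by rw [geom_sum_mul, add_pow_char, one_pow, add_sub_cancel_left]
    _ = Y ^ (p - 1) * Y := (pow_sub_one_mul (Fact.out : p.Prime).ne_zero Y).symm

theorem nuPoly_zmod (p n : ℕ) [Fact p.Prime] (hn : 1 ≤ n) :
    nuPoly (ZMod p) p n = X ^ (p ^ n - p ^ (n - 1)) := by
  have hexp : p ^ (n - 1) * (p - 1) = p ^ n - p ^ (n - 1) := by
    rw [Nat.mul_sub_one, ← pow_succ, Nat.sub_add_cancel hn]
  calc nuPoly (ZMod p) p n
      = ∑ k ∈ Finset.range p, (1 + X ^ p ^ (n - 1)) ^ k := by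
        refine Finset.sum_congr rfl fun k _ => ?_
        rw [mul_comm, pow_mul, add_pow_char_pow, one_pow]
    _ = X ^ (p ^ n - p ^ (n - 1)) := by
        rw [sum_range_one_add_pow_eq_pow_pred, ← pow_mul, hexp]

noncomputable def nuPolyInt (p n : ℕ) : ℤ[X] :=
  ∑ k ∈ Finset.range p, (1 + X) ^ (k * p ^ (n - 1))

theorem map_nuPolyInt (K : Type*) [Field K] (p n : ℕ) :
    (nuPolyInt p n).map (Int.castRingHom K) = nuPoly K p n := by
  simp [nuPolyInt, nuPoly, Polynomial.map_sum]

section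

variable {K : Type*} [Field K] {v : K → ℤ}

theorem finite_setOf_coeff_values (v : K → ℤ) (F : K[X]) :
    {m : ℤ | ∃ i, F.coeff i ≠ 0 ∧ v (F.coeff i) = m}.Finite := by
  refine (F.support.finite_toSet.image fun j => v (F.coeff j)).subset ?_
  rintro _ ⟨j, hj, rfl⟩
  exact ⟨j, mem_support_iff.mpr hj, rfl⟩

theorem exists_coeff_eq_muInv (v : K → ℤ) {F : K[X]} (hF : F ≠ 0) :
    ∃ i, F.coeff i ≠ 0 ∧ v (F.coeff i) = muInv v F :=
  Set.Nonempty.csInf_mem (s := {m : ℤ | ∃ i, F.coeff i ≠ 0 ∧ v (F.coeff i) = m})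
    ⟨_, F.natDegree, by simpa using hF, rfl⟩ (finite_setOf_coeff_values v F)

namespace IsOrd

theorem map_one (hv : IsOrd v) : v 1 = 0 := by
  have h := hv.1 1 1 one_ne_zero one_ne_zero
  rw [mul_one] at h
  omega

theorem map_neg (hv : IsOrd v) {x : K} (hx : x ≠ 0) : v (-x) = v x := by
  have h₁ := hv.1 (-x) (-x) (neg_ne_zero.mpr hx) (neg_ne_zero.mpr hx)
  have h₂ := hv.1 x x hx hx
  rw [neg_mul_neg] at h₁
  omega

/-- The fractional ideal `ϖ^B O`, viewed as an additive subgroup of `K`. -/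
def geAddSubgroup (hv : IsOrd v) (B : ℤ) : AddSubgroup K where
  carrier := {x | x = 0 ∨ B ≤ v x}
  zero_mem' := Or.inl rfl
  add_mem' := by
    intro x y hx hy
    by_cases hx0 : x = 0
    · simpa [hx0] using hy
    by_cases hy0 : y = 0
    · simpa [hy0] using hx
    by_cases hs : x + y = 0
    · exact Or.inl hs
    exact Or.inr <|
      (le_min (hx.resolve_left hx0) (hy.resolve_left hy0)).trans (hv.2 x y hx0 hy0 hs)
  neg_mem' := by
    rintro x (rfl | hx)
    · simp
    · by_cases hx0 : x = 0
      · simp [hx0]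
      · exact Or.inr (hv.map_neg hx0 ▸ hx)

theorem mem_geAddSubgroup (hv : IsOrd v) {B : ℤ} {x : K} :
    x ∈ hv.geAddSubgroup B ↔ x = 0 ∨ B ≤ v x :=
  Iff.rfl

theorem geAddSubgroup_antitone (hv : IsOrd v) : Antitone hv.geAddSubgroup := by
  rintro a b hab x (hx | hx)
  exacts [Or.inl hx, Or.inr (hab.trans hx)]

theorem mul_mem_geAddSubgroup (hv : IsOrd v) {a b : ℤ} {x y : K}
    (hx : x ∈ hv.geAddSubgroup a) (hy : y ∈ hv.geAddSubgroup b) :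
    x * y ∈ hv.geAddSubgroup (a + b) := by
  by_cases hx0 : x = 0
  · simp [hx0]
  by_cases hy0 : y = 0
  · simp [hy0]
  refine Or.inr ?_
  rw [hv.1 x y hx0 hy0]
  exact add_le_add (hx.resolve_left hx0) (hy.resolve_left hy0)

theorem intCast_mem_geAddSubgroup_zero (hv : IsOrd v) (m : ℤ) :
    (m : K) ∈ hv.geAddSubgroup 0 := by
  rw [← zsmul_one]
  exact zsmul_mem (Or.inr hv.map_one.ge) m

theorem eq_of_mem_geAddSubgroup_of_notMem (hv : IsOrd v) {B : ℤ} {x : K}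
    (hx : x ∈ hv.geAddSubgroup B) (hx' : x ∉ hv.geAddSubgroup (B + 1)) :
    x ≠ 0 ∧ v x = B := by
  rw [mem_geAddSubgroup, not_or] at hx'
  exact ⟨hx'.1, le_antisymm (by omega) (hx.resolve_left hx'.1)⟩

theorem coeff_mul_mem_geAddSubgroup (hv : IsOrd v) {a b : ℤ} {F G : K[X]}
    (hF : ∀ i, F.coeff i ∈ hv.geAddSubgroup a) (hG : ∀ i, G.coeff i ∈ hv.geAddSubgroup b)
    (i : ℕ) : (F * G).coeff i ∈ hv.geAddSubgroup (a + b) := by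
  rw [coeff_mul]
  exact AddSubgroup.sum_mem _ fun x _ => hv.mul_mem_geAddSubgroup (hF x.1) (hG x.2)

theorem coeff_mem_geAddSubgroup_muInv (hv : IsOrd v) (F : K[X]) (i : ℕ) :
    F.coeff i ∈ hv.geAddSubgroup (muInv v F) := by
  by_cases hi : F.coeff i = 0
  · exact Or.inl hi
  exact Or.inr (csInf_le (finite_setOf_coeff_values v F).bddBelow ⟨i, hi, rfl⟩)

theorem coeff_lamInv_notMem (hv : IsOrd v) {F : K[X]} (hF : F ≠ 0) :
    F.coeff (lamInv v F) ∉ hv.geAddSubgroup (muInv v F + 1) := by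
  have hl : lamInv v F ∈ {i : ℕ | F.coeff i ≠ 0 ∧ v (F.coeff i) = muInv v F} :=
    Nat.sInf_mem (exists_coeff_eq_muInv v hF)
  obtain ⟨hl0, hlv⟩ := hl
  exact fun h => absurd (h.resolve_left hl0) (by rw [hlv]; omega)

theorem coeff_mem_of_lt_lamInv (hv : IsOrd v) {F : K[X]} {i : ℕ} (hi : i < lamInv v F) :
    F.coeff i ∈ hv.geAddSubgroup (muInv v F + 1) := by
  by_cases h0 : F.coeff i = 0
  · exact Or.inl h0
  have hle := (hv.coeff_mem_geAddSubgroup_muInv F i).resolve_left h0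
  exact Or.inr (lt_of_le_of_ne hle fun h => Nat.notMem_of_lt_sInf hi ⟨h0, h.symm⟩)

theorem muInv_eq_and_lamInv_eq (hv : IsOrd v) {F : K[X]} {μ : ℤ} {l : ℕ}
    (hμ : ∀ i, F.coeff i ∈ hv.geAddSubgroup μ)
    (hl : F.coeff l ∉ hv.geAddSubgroup (μ + 1))
    (hlt : ∀ i < l, F.coeff i ∈ hv.geAddSubgroup (μ + 1)) :
    F ≠ 0 ∧ muInv v F = μ ∧ lamInv v F = l := by
  obtain ⟨hl0, hlv⟩ := hv.eq_of_mem_geAddSubgroup_of_notMem (hμ l) hl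
  have hmu : muInv v F = μ := by
    refine le_antisymm
      (hlv ▸ csInf_le (finite_setOf_coeff_values v F).bddBelow ⟨l, hl0, rfl⟩) ?_
    refine le_csInf ⟨_, l, hl0, rfl⟩ ?_
    rintro _ ⟨i, hi, rfl⟩
    exact (hμ i).resolve_left hi
  refine ⟨fun h => hl0 (by simp [h]), hmu, le_antisymm (Nat.sInf_le ⟨hl0, hmu ▸ hlv⟩) ?_⟩
  refine le_csInf ⟨l, hl0, hmu ▸ hlv⟩ fun i ⟨hi0, hiv⟩ => ?_
  by_contra hi
  have := (hlt i (not_le.mp hi)).resolve_left hi0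
  omega

theorem coeff_map_mem_geAddSubgroup_one (hv : IsOrd v) {p : ℕ} (hres : ResidueCharP v p)
    {f : ℤ[X]} (hf : f.map (Int.castRingHom (ZMod p)) = 0) (i : ℕ) :
    (f.map (Int.castRingHom K)).coeff i ∈ hv.geAddSubgroup 1 := by
  have hdvd : (p : ℤ) ∣ f.coeff i := by
    rw [← ZMod.intCast_zmod_eq_zero_iff_dvd, ← eq_intCast (Int.castRingHom (ZMod p)),
      ← coeff_map, hf, coeff_zero]
  obtain ⟨m, hm⟩ := hdvd
  rw [coeff_map, hm, eq_intCast, Int.cast_mul, Int.cast_natCast, ← add_zero 1]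
  -- `ResidueCharP v p` unfolds to `(p : K) ∈ hv.geAddSubgroup 1`.
  exact hv.mul_mem_geAddSubgroup hres (hv.intCast_mem_geAddSubgroup_zero m)

theorem coeff_nuPoly_sub_X_pow_mem (hv : IsOrd v) {p : ℕ} (hp : p.Prime)
    (hres : ResidueCharP v p) {n : ℕ} (hn : 1 ≤ n) (i : ℕ) :
    (nuPoly K p n - X ^ (p ^ n - p ^ (n - 1))).coeff i ∈ hv.geAddSubgroup 1 := by
  have : Fact p.Prime := ⟨hp⟩
  have hzmod :
      (nuPolyInt p n - X ^ (p ^ n - p ^ (n - 1))).map (Int.castRingHom (ZMod p)) = 0 := by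
    rw [Polynomial.map_sub, map_nuPolyInt, nuPoly_zmod p n hn, Polynomial.map_pow, map_X,
      sub_self]
  simpa [map_nuPolyInt] using coeff_map_mem_geAddSubgroup_one hv hres hzmod i

end IsOrd

end

theorem invariants_of_corestriction_general
    {K : Type*} [Field K] (p : ℕ) (hp : p.Prime)
    (v : K → ℤ) (hv : IsOrd v) (hres : ResidueCharP v p)
    (n : ℕ) (hn : 1 ≤ n)
    (g : Polynomial K) (hg : g ≠ 0) :
    nuPoly K p n * g ≠ 0 ∧
      muInv v (nuPoly K p n * g) = muInv v g ∧
      lamInv v (nuPoly K p n * g) = p ^ n - p ^ (n - 1) + lamInv v g := by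
  set N := p ^ n - p ^ (n - 1)
  set μ := muInv v g
  have hE : ∀ i, ((nuPoly K p n - X ^ N) * g).coeff i ∈ hv.geAddSubgroup (μ + 1) := by
    simpa only [add_comm (1 : ℤ)] using hv.coeff_mul_mem_geAddSubgroup
      (hv.coeff_nuPoly_sub_X_pow_mem hp hres hn) (hv.coeff_mem_geAddSubgroup_muInv g)
  have hcoeff (i : ℕ) : (nuPoly K p n * g).coeff i =
      (if N ≤ i then g.coeff (i - N) else 0) + ((nuPoly K p n - X ^ N) * g).coeff i := by
    rw [← coeff_X_pow_mul', ← coeff_add, ← add_mul, add_sub_cancel]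
  refine hv.muInv_eq_and_lamInv_eq (fun i => ?_) ?_ fun i hi => ?_
  · rw [hcoeff]
    refine add_mem ?_ (hv.geAddSubgroup_antitone (le_add_of_nonneg_right zero_le_one) (hE i))
    split_ifs
    exacts [hv.coeff_mem_geAddSubgroup_muInv g _, zero_mem _]
  · rw [hcoeff, if_pos (Nat.le_add_right N _), Nat.add_sub_cancel_left,
      AddSubgroup.add_mem_cancel_right _ (hE _)]
    exact hv.coeff_lamInv_notMem hg
  · rw [hcoeff]
    refine add_mem ?_ (hE i)
    split_ifs
    exacts [hv.coeff_mem_of_lt_lamInv (by omega), zero_mem _]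

/-- Lemma 3.3(2): effect of corestriction (multiplication by ν_n) on the
Iwasawa invariants: μ is preserved and λ grows by p^n − p^(n-1). -/
theorem invariants_of_corestriction
    {K : Type*} [Field K] (p : ℕ) (hp : p.Prime)
    (v : K → ℤ) (hv : IsOrd v) (hres : ResidueCharP v p)
    (n : ℕ) (hn : 1 ≤ n)
    (g : Polynomial K) (hg : g ≠ 0) (hdeg : g.degree < (p ^ (n - 1) : ℕ)) :
    nuPoly K p n * g ≠ 0 ∧
      muInv v (nuPoly K p n * g) = muInv v g ∧
      lamInv v (nuPoly K p n * g) = p ^ n - p ^ (n - 1) + lamInv v g :=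
  invariants_of_corestriction_general p hp v hv hres n hn g hg
end

section
/- Let α be a unit of O and let (F_n)_{n≥0} be a sequence of polynomials in K[T] with deg F_n < p^n for every n, such that F_n − α^{-1}·ν_n·F_{n-1} ∈ O[T] for all n ≥ 1. Then either F_n ∈ O[T] for all n ≥ 0, or F_n ∉ O[T] for all n ≥ 0. -/
open Polynomial

section Aux
variable {K : Type*} [Field K] {v : K → ℤ}

lemma IsOrd.v_one (hv : IsOrd v) : v 1 = 0 := by
  have := hv.1 1 1 one_ne_zero one_ne_zero
  simp at this; omega

lemma IsOrd.v_neg (hv : IsOrd v) {x : K} (hx : x ≠ 0) : v (-x) = v x := by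
  have h1 : v ((-1 : K) * (-1)) = v (-1) + v (-1) := hv.1 _ _ (by norm_num) (by norm_num)
  simp [hv.v_one] at h1
  have h2 : v ((-1 : K) * x) = v (-1) + v x := hv.1 _ _ (by norm_num) hx
  simp at h2; omega

lemma IsOrd.v_inv (hv : IsOrd v) {x : K} (hx : x ≠ 0) : v x⁻¹ = - v x := by
  have := hv.1 x x⁻¹ hx (inv_ne_zero hx)
  rw [mul_inv_cancel₀ hx, hv.v_one] at this; omega

lemma IsOrd.v_sum {ι : Type*} (hv : IsOrd v) (s : Finset ι) (f : ι → K) (c : ℤ) :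
    (∀ i ∈ s, f i ≠ 0 → c ≤ v (f i)) → (∑ i ∈ s, f i ≠ 0) → c ≤ v (∑ i ∈ s, f i) := by
  classical
  induction s using Finset.induction_on with
  | empty => intro _ hs; simp at hs
  | @insert a s hni ih =>
    intro h hs
    rw [Finset.sum_insert hni] at hs ⊢
    by_cases ha : f a = 0
    · rw [ha, zero_add] at hs ⊢
      exact ih (fun i hi => h i (Finset.mem_insert_of_mem hi)) hs
    by_cases hrest : ∑ i ∈ s, f i = 0
    · rw [hrest, add_zero]; exact h a (Finset.mem_insert_self a s) ha
    · have h1 := h a (Finset.mem_insert_self a s) ha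
      have h2 := ih (fun i hi => h i (Finset.mem_insert_of_mem hi)) hrest
      have := hv.2 _ _ ha hrest hs
      omega

lemma IsOrd.v_nat (hv : IsOrd v) (m : ℕ) (h : (m : K) ≠ 0) : 0 ≤ v (m : K) := by
  induction m with
  | zero => simp at h
  | succ k ih =>
    by_cases hk : (k : K) = 0
    · have h1 : ((k + 1 : ℕ) : K) = 1 := by push_cast; rw [hk]; ring
      rw [h1, hv.v_one]
    · push_cast at h ⊢
      have hk' := ih hk
      have := hv.2 k 1 hk one_ne_zero h
      have h1 := hv.v_one
      omega

lemma IsOrd.v_add_dominant (hv : IsOrd v) {x y : K} (hx : x ≠ 0)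
    (hy : y = 0 ∨ (y ≠ 0 ∧ v x < v y)) : x + y ≠ 0 ∧ v (x + y) = v x := by
  rcases hy with rfl | ⟨hy, hlt⟩
  · simp [hx]
  have hne : x + y ≠ 0 := by
    intro h
    have hxy : x = -y := eq_neg_of_add_eq_zero_left h
    rw [hxy, hv.v_neg hy] at hlt
    omega
  refine ⟨hne, ?_⟩
  have h1 := hv.2 _ _ hx hy hne
  have h2 : min (v (x + y)) (v (-y)) ≤ v (x + y + -y) := by
    refine hv.2 _ _ hne (neg_ne_zero.mpr hy) ?_
    simpa using hx
  rw [hv.v_neg hy] at h2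
  simp only [add_neg_cancel_right] at h2
  omega

lemma IntegralPoly.add {F G : Polynomial K} (hv : IsOrd v)
    (hF : IntegralPoly v F) (hG : IntegralPoly v G) : IntegralPoly v (F + G) := by
  intro i hi
  rw [coeff_add] at hi ⊢
  by_cases hf : F.coeff i = 0
  · rw [hf, zero_add] at hi ⊢; exact hG i hi
  by_cases hg : G.coeff i = 0
  · rw [hg, add_zero] at hi ⊢; exact hF i hi
  have := hv.2 _ _ hf hg hi
  have := hF i hf; have := hG i hg
  omega

lemma IntegralPoly.neg {F : Polynomial K} (hv : IsOrd v)
    (hF : IntegralPoly v F) : IntegralPoly v (-F) := by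
  intro i hi
  rw [coeff_neg] at hi ⊢
  rw [hv.v_neg (by simpa using hi)]
  exact hF i (by simpa using hi)

lemma IntegralPoly.mul {F G : Polynomial K} (hv : IsOrd v)
    (hF : IntegralPoly v F) (hG : IntegralPoly v G) : IntegralPoly v (F * G) := by
  intro i hi
  rw [coeff_mul] at hi ⊢
  refine hv.v_sum _ _ 0 (fun x _ hx => ?_) hi
  have h1 : F.coeff x.1 ≠ 0 := fun h => hx (by rw [h, zero_mul])
  have h2 : G.coeff x.2 ≠ 0 := fun h => hx (by rw [h, mul_zero])
  rw [hv.1 _ _ h1 h2]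
  have := hF _ h1; have := hG _ h2; omega

lemma IntegralPoly.C_unit (hv : IsOrd v) {a : K} (ha : v a = 0) :
    IntegralPoly v (C a) := by
  intro i hi
  rcases eq_or_ne i 0 with rfl | h
  · simp [coeff_C_zero, ha]
  · simp [coeff_C, h] at hi

lemma nuPoly_coeff (K : Type*) [Field K] (p n i : ℕ) :
    (nuPoly K p n).coeff i
      = ((∑ k ∈ Finset.range p, (k * p ^ (n - 1)).choose i : ℕ) : K) := by
  rw [nuPoly, finset_sum_coeff]
  push_cast
  exact Finset.sum_congr rfl fun k _ => coeff_one_add_X_pow K _ i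

lemma nuPoly_integral (hv : IsOrd v) (p n : ℕ) : IntegralPoly v (nuPoly K p n) := by
  intro i hi
  rw [nuPoly_coeff] at hi ⊢
  exact hv.v_nat _ hi

lemma nuPoly_top_coeff (K : Type*) [Field K] {p : ℕ} (hp : 0 < p) (n : ℕ) :
    (nuPoly K p n).coeff ((p - 1) * p ^ (n - 1)) = 1 := by
  rw [nuPoly_coeff]
  have hpow : 0 < p ^ (n - 1) := pow_pos hp _
  have h1 : ∑ k ∈ Finset.range p, (k * p ^ (n - 1)).choose ((p - 1) * p ^ (n - 1)) = 1 := by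
    rw [Finset.sum_eq_single (p - 1)]
    · simp
    · intro k hk hne
      have hk' : k < p := Finset.mem_range.mp hk
      have hklt : k < p - 1 := by omega
      exact Nat.choose_eq_zero_of_lt ((Nat.mul_lt_mul_right hpow).mpr hklt)
    · intro h; exact absurd (Finset.mem_range.mpr (by omega)) h
  rw [h1]; norm_num

lemma nuPoly_coeff_eq_zero (K : Type*) [Field K] {p : ℕ} (hp : 0 < p) (n : ℕ)
    {m : ℕ} (hm : (p - 1) * p ^ (n - 1) < m) : (nuPoly K p n).coeff m = 0 := by
  rw [nuPoly_coeff]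
  have h1 : ∑ k ∈ Finset.range p, (k * p ^ (n - 1)).choose m = 0 := by
    refine Finset.sum_eq_zero fun k hk => ?_
    have hk' : k < p := Finset.mem_range.mp hk
    refine Nat.choose_eq_zero_of_lt ?_
    calc k * p ^ (n - 1) ≤ (p - 1) * p ^ (n - 1) :=
          Nat.mul_le_mul_right _ (by omega)
      _ < m := hm
  rw [h1]; norm_num

/-- Gauss-lemma step: if `ν` is monic-at-`d` with integral coefficients (vanishing above
`d`) and `ν * G` is integral, then `G` is integral. -/
lemma gauss_step (hv : IsOrd v) {ν G : Polynomial K} (d : ℕ)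
    (hνint : IntegralPoly v ν) (hνd : ν.coeff d = 1)
    (hνtop : ∀ m, d < m → ν.coeff m = 0)
    (hint : IntegralPoly v (ν * G)) : IntegralPoly v G := by
  classical
  by_contra hbad
  simp only [IntegralPoly, not_forall, not_le] at hbad
  obtain ⟨j0, hj0ne, hj0v⟩ := hbad
  set P : ℕ → Prop := fun i => G.coeff i ≠ 0 ∧ v (G.coeff i) < 0 with hP
  have hj0le : j0 ≤ G.natDegree := le_natDegree_of_ne_zero hj0ne
  set j := Nat.findGreatest P G.natDegree with hj
  have hPj : P j := Nat.findGreatest_spec hj0le ⟨hj0ne, hj0v⟩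
  have hgreatest : ∀ m, j < m → ¬ P m := by
    intro m hm
    by_cases hmle : m ≤ G.natDegree
    · exact Nat.findGreatest_is_greatest hm hmle
    · intro hPm
      exact hPm.1 (coeff_eq_zero_of_natDegree_lt (by omega))
  have hmem : ((d, j) : ℕ × ℕ) ∈ Finset.HasAntidiagonal.antidiagonal (d + j) := by simp
  have hsum : (ν * G).coeff (d + j)
      = G.coeff j
        + ∑ x ∈ (Finset.HasAntidiagonal.antidiagonal (d + j)).erase (d, j), ν.coeff x.1 * G.coeff x.2 := by
    rw [coeff_mul, ← Finset.add_sum_erase _ _ hmem, hνd, one_mul]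
  set y := ∑ x ∈ (Finset.HasAntidiagonal.antidiagonal (d + j)).erase (d, j), ν.coeff x.1 * G.coeff x.2
    with hy
  have hterm : ∀ x ∈ (Finset.HasAntidiagonal.antidiagonal (d + j)).erase (d, j),
      ν.coeff x.1 * G.coeff x.2 ≠ 0 → (0:ℤ) ≤ v (ν.coeff x.1 * G.coeff x.2) := by
    rintro ⟨a, b⟩ hx hne
    have hab : a + b = d + j := by
      have := Finset.mem_of_mem_erase hx
      simpa using this
    have hne2 : (a, b) ≠ (d, j) := Finset.ne_of_mem_erase hx
    have h1 : ν.coeff a ≠ 0 := fun h => hne (by rw [h, zero_mul])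
    have h2 : G.coeff b ≠ 0 := fun h => hne (by rw [h, mul_zero])
    have had : a ≤ d := by
      by_contra h
      exact h1 (hνtop a (by omega))
    have hbj' : j < b := by
      rcases Nat.lt_or_ge j b with h | h
      · exact h
      · exfalso; apply hne2
        have hb : b = j := by omega
        subst hb
        have ha2 : a = d := by omega
        subst ha2; rfl
    have hGb : 0 ≤ v (G.coeff b) := by
      have := hgreatest b hbj'
      simp only [hP, not_and, not_lt] at this
      exact this h2
    rw [hv.1 _ _ h1 h2]
    have := hνint a h1
    omega
  have hvy : y ≠ 0 → (0:ℤ) ≤ v y := fun h => hv.v_sum _ _ 0 hterm h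
  have hyv : y = 0 ∨ (y ≠ 0 ∧ v (G.coeff j) < v y) := by
    by_cases h : y = 0
    · exact Or.inl h
    · exact Or.inr ⟨h, by have h3 := hvy h; have h4 := hPj.2; omega⟩
  have hdom := hv.v_add_dominant (x := G.coeff j) hPj.1 hyv
  have hne : (ν * G).coeff (d + j) ≠ 0 := by rw [hsum]; exact hdom.1
  have hfin := hint (d + j) hne
  rw [hsum, hdom.2] at hfin
  exact absurd hfin (not_le.mpr hPj.2)

end Aux

/-- The all-or-nothing integrality alternative underlying Theorem B: if each
Fₙ − α⁻¹·νₙ·Fₙ₋₁ is integral, then either every Fₙ lies in O[T] or none does. -/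
theorem integrality_alternative
    {K : Type*} [Field K] (p : ℕ) (hp : p.Prime)
    (v : K → ℤ) (hv : IsOrd v)
    (α : K) (hα0 : α ≠ 0) (hα : v α = 0)
    (F : ℕ → Polynomial K)
    (hdeg : ∀ n, (F n).degree < (p ^ n : ℕ))
    (hA : ∀ n, 1 ≤ n →
      IntegralPoly v (F n - Polynomial.C α⁻¹ * nuPoly K p n * F (n - 1))) :
    (∀ n, IntegralPoly v (F n)) ∨ (∀ n, ¬ IntegralPoly v (F n)) := by
  have hαinv : v α⁻¹ = 0 := by rw [hv.v_inv hα0, hα]; rfl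
  have step_up : ∀ n, IntegralPoly v (F n) → IntegralPoly v (F (n+1)) := by
    intro n hFn
    have hAn := hA (n+1) (by omega)
    simp only [Nat.add_sub_cancel] at hAn
    have hdecomp : F (n+1)
        = (F (n+1) - C α⁻¹ * nuPoly K p (n+1) * F n) + C α⁻¹ * nuPoly K p (n+1) * F n := by
      ring
    rw [hdecomp]
    exact hAn.add hv
      (((IntegralPoly.C_unit hv hαinv).mul hv (nuPoly_integral hv p (n+1))).mul hv hFn)
  have step_down : ∀ n, IntegralPoly v (F (n+1)) → IntegralPoly v (F n) := by
    intro n hFn1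
    have hAn := hA (n+1) (by omega)
    simp only [Nat.add_sub_cancel] at hAn
    have hCα : IntegralPoly v (C α) := IntegralPoly.C_unit hv hα
    have key : nuPoly K p (n+1) * F n
        = C α * (F (n+1) - (F (n+1) - C α⁻¹ * nuPoly K p (n+1) * F n)) := by
      rw [sub_sub_cancel, ← mul_assoc, ← mul_assoc, ← C_mul, mul_inv_cancel₀ hα0, C_1, one_mul]
    have hint : IntegralPoly v (nuPoly K p (n+1) * F n) := by
      rw [key]
      exact hCα.mul hv (by simpa [sub_eq_add_neg] using hFn1.add hv (hAn.neg hv))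
    exact gauss_step hv ((p - 1) * p ^ n) (nuPoly_integral hv p (n+1))
      (by simpa using nuPoly_top_coeff K hp.pos (n+1))
      (fun m hm => nuPoly_coeff_eq_zero K hp.pos (n+1) (by simpa using hm)) hint
  by_cases h0 : IntegralPoly v (F 0)
  · left
    intro n
    induction n with
    | zero => exact h0
    | succ k ih => exact step_up k ih
  · right
    intro n
    induction n with
    | zero => exact h0
    | succ k ih => exact fun h => ih (step_down k h)
end
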